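/- Suppose p ≥ 1, p ≠ 2, and T is an isometric isomorphism of ℓ^p ⊕_p L^p[0,1] onto a Banach space B which is the internal direct sum of disjointly supported subspaces U ≅ ℓ^p (spanned by atoms) and V containing no atoms of the subvector order. Then T maps ℓ^p ⊕ {0} onto U and {0} ⊕ L^p[0,1] onto V. -/

import Mathlib

open MeasureTheory

/-- `f` is a subvector of `g`: `f = g · χ_A` a.e. for some measurable set `A`. -/
def Subvec {α : Type*} [MeasurableSpace α] {μ : Measure α} {p : ENNReal}
    (f g : Lp ℂ p μ) : Prop :=
  ∃ A : Set α, MeasurableSet A ∧ (f : α → ℂ) =ᵐ[μ] A.indicator (g : α → ℂ)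

/-- `g` is an atom of the subvector order: `g ≠ 0` and its only subvectors are `0` and `g`. -/
def SubvecAtom {α : Type*} [MeasurableSpace α] {μ : Measure α} {p : ENNReal}
    (g : Lp ℂ p μ) : Prop :=
  g ≠ 0 ∧ ∀ h : Lp ℂ p μ, Subvec h g → h = 0 ∨ h = g

/-!
For `p ≠ 2` the Clarkson defect `‖x + y‖ ^ p + ‖x - y‖ ^ p - 2 ‖x‖ ^ p - 2 ‖y‖ ^ p` has the sign
of `p - 2` on `L^p`, on `ℓ^p` and on their `p`-sum, and vanishes exactly on pairs with disjoint
supports. Disjointness, and with it the atoms of the subvector order, are therefore expressed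
through the norm alone and are preserved by `T`. In `ℓ^p ⊕_p L^p[0,1]` the atoms are the nonzero
multiples of the unit vectors of `ℓ^p` (Lebesgue measure has no atoms), whose closed span is
`ℓ^p ⊕ 0`; hence `T (ℓ^p ⊕ 0) = U`. A vector of `V` is disjoint from the images of the unit
vectors, so `T⁻¹ V ⊆ 0 ⊕ L^p`, and the modular law turns this inclusion into an equality because
`U ⊔ V` is everything while `ℓ^p ⊕ 0` and `0 ⊕ L^p` meet only in `0`.
-/
open Set

namespace Real

theorem sub_one_mul_rpow_add_sub_pos {a b r : ℝ} (ha : 0 < a) (hb : 0 < b) (hr : r ≠ 1) :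
    0 < (r - 1) * ((a + b) ^ r - a ^ r - b ^ r) := by
  have hab : 0 < a + b := add_pos ha hb
  have hmono : ∀ {c : ℝ}, 0 < c → c < a + b →
      0 < (r - 1) * ((a + b) ^ (r - 1) - c ^ (r - 1)) := by
    intro c hc hlt
    rcases lt_or_gt_of_ne hr with h | h
    · exact mul_pos_of_neg_of_neg (by linarith)
        (sub_neg.2 (rpow_lt_rpow_of_neg hc hlt (by linarith)))
    · exact mul_pos (by linarith) (sub_pos.2 (rpow_lt_rpow hc.le hlt (by linarith)))
  have hsplit : ∀ {c : ℝ}, 0 < c → c ^ r = c * c ^ (r - 1) := fun hc => by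
    rw [rpow_sub_one hc.ne', mul_div_cancel₀ _ hc.ne']
  have h1 := hmono ha (by linarith)
  have h2 := hmono hb (by linarith)
  calc 0 < a * ((r - 1) * ((a + b) ^ (r - 1) - a ^ (r - 1)))
        + b * ((r - 1) * ((a + b) ^ (r - 1) - b ^ (r - 1))) := by positivity
    _ = _ := by rw [hsplit hab, hsplit ha, hsplit hb]; ring

theorem sub_one_mul_rpow_add_sub_nonneg {a b r : ℝ} (ha : 0 ≤ a) (hb : 0 ≤ b) (hr : 0 < r) :
    0 ≤ (r - 1) * ((a + b) ^ r - a ^ r - b ^ r) := by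
  rcases ha.eq_or_lt with rfl | ha
  · simp [zero_rpow hr.ne']
  rcases hb.eq_or_lt with rfl | hb
  · simp [zero_rpow hr.ne']
  rcases eq_or_ne r 1 with rfl | hr1
  · simp
  exact (sub_one_mul_rpow_add_sub_pos ha hb hr1).le

theorem sub_one_mul_rpow_add_rpow_sub_nonneg {a b r : ℝ} (ha : 0 ≤ a) (hb : 0 ≤ b)
    (hr : 0 < r) : 0 ≤ (r - 1) * (a ^ r + b ^ r - 2 * ((a + b) / 2) ^ r) := by
  have hmid : (1 / 2 : ℝ) • a + (1 / 2 : ℝ) • b = (a + b) / 2 := by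
    simp only [smul_eq_mul]; ring
  have hw : (0 : ℝ) ≤ 1 / 2 := by norm_num
  rcases le_total r 1 with h | h
  · have := (concaveOn_rpow hr.le h).2 ha hb hw hw (by norm_num)
    rw [hmid, smul_eq_mul, smul_eq_mul] at this
    exact mul_nonneg_of_nonpos_of_nonpos (by linarith) (by linarith)
  · have := (convexOn_rpow h).2 ha hb hw hw (by norm_num)
    rw [hmid, smul_eq_mul, smul_eq_mul] at this
    exact mul_nonneg (by linarith) (by linarith)

theorem rpow_eq_sq_rpow_half {x : ℝ} (hx : 0 ≤ x) (p : ℝ) : x ^ p = (x ^ 2) ^ (p / 2) := by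
  rw [← rpow_natCast, ← rpow_mul hx, Nat.cast_ofNat, mul_div_cancel₀ p two_ne_zero]

end Real

noncomputable def pDefect (p : ℝ) {E : Type*} [SeminormedAddCommGroup E] (x y : E) : ℝ :=
  ‖x + y‖ ^ p + ‖x - y‖ ^ p - 2 * ‖x‖ ^ p - 2 * ‖y‖ ^ p

section Seminormed

variable {E : Type*} [SeminormedAddCommGroup E] {p : ℝ}

theorem pDefect_zero_left (hp : p ≠ 0) (y : E) : pDefect p 0 y = 0 := by
  simp [pDefect, Real.zero_rpow hp]; ring

theorem pDefect_zero_right (hp : p ≠ 0) (x : E) : pDefect p x 0 = 0 := by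
  simp [pDefect, Real.zero_rpow hp]; ring

end Seminormed

theorem eq_zero_of_pDefect_neg_right_self (𝕜 : Type*) [RCLike 𝕜] {E : Type*}
    [NormedAddCommGroup E] [NormedSpace 𝕜 E] {p : ℝ} (hp : 0 < p) (hp2 : p ≠ 2) {x : E}
    (h : pDefect p x (-x) = 0) : x = 0 := by
  have hdef : pDefect p x (-x) = (2 ^ p - 4) * ‖x‖ ^ p := by
    rw [pDefect, sub_neg_eq_add, add_neg_cancel, ← two_nsmul, RCLike.norm_nsmul 𝕜, nsmul_eq_mul,
      Nat.cast_ofNat, Real.mul_rpow zero_le_two (norm_nonneg x), norm_zero, norm_neg,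
      Real.zero_rpow hp.ne']
    ring
  have h4 : (2 : ℝ) ^ p ≠ 4 := by
    intro h4
    apply hp2
    have := congrArg (Real.logb 2) h4
    rw [Real.logb_rpow (by norm_num) (by norm_num)] at this
    rw [this, show (4 : ℝ) = 2 ^ (2 : ℝ) by norm_num, Real.logb_rpow (by norm_num) (by norm_num)]
  rw [hdef] at h
  rcases mul_eq_zero.1 h with h | h
  · exact absurd (sub_eq_zero.1 h) h4
  · exact norm_eq_zero.1 ((Real.rpow_eq_zero (norm_nonneg x) hp.ne').1 h)

section InnerProductSpace

variable {E : Type*} [NormedAddCommGroup E] [InnerProductSpace ℝ E] {p : ℝ}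

/-- Clarkson's splitting: with `r = p / 2` the defect is a midpoint-convexity gap for `t ↦ t ^ r`
(by the parallelogram law) plus twice a superadditivity gap. -/
theorem sub_two_mul_pDefect_eq (p : ℝ) (x y : E) :
    (p - 2) * pDefect p x y =
      2 * ((p / 2 - 1) * ((‖x + y‖ ^ 2) ^ (p / 2) + (‖x - y‖ ^ 2) ^ (p / 2)
        - 2 * ((‖x + y‖ ^ 2 + ‖x - y‖ ^ 2) / 2) ^ (p / 2)))
      + 4 * ((p / 2 - 1) * ((‖x‖ ^ 2 + ‖y‖ ^ 2) ^ (p / 2) - (‖x‖ ^ 2) ^ (p / 2)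
        - (‖y‖ ^ 2) ^ (p / 2))) := by
  have hpar : (‖x + y‖ ^ 2 + ‖x - y‖ ^ 2) / 2 = ‖x‖ ^ 2 + ‖y‖ ^ 2 := by
    have := parallelogram_law_with_norm ℝ x y
    simp only [sq]
    linarith
  simp only [pDefect, Real.rpow_eq_sq_rpow_half (norm_nonneg _) p, hpar]
  ring

theorem sub_two_mul_pDefect_nonneg (hp : 0 < p) (x y : E) : 0 ≤ (p - 2) * pDefect p x y := by
  rw [sub_two_mul_pDefect_eq]
  have := Real.sub_one_mul_rpow_add_rpow_sub_nonneg (sq_nonneg ‖x + y‖) (sq_nonneg ‖x - y‖)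
    (half_pos hp)
  have := Real.sub_one_mul_rpow_add_sub_nonneg (sq_nonneg ‖x‖) (sq_nonneg ‖y‖) (half_pos hp)
  linarith

theorem pDefect_eq_zero_iff (hp : 0 < p) (hp2 : p ≠ 2) {x y : E} :
    pDefect p x y = 0 ↔ x = 0 ∨ y = 0 := by
  refine ⟨fun h => ?_, ?_⟩
  · by_contra! hxy
    have hgap := Real.sub_one_mul_rpow_add_sub_pos (pow_pos (norm_pos_iff.2 hxy.1) 2)
      (pow_pos (norm_pos_iff.2 hxy.2) 2) (r := p / 2) (by contrapose! hp2; linarith)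
    have hmid := Real.sub_one_mul_rpow_add_rpow_sub_nonneg (sq_nonneg ‖x + y‖)
      (sq_nonneg ‖x - y‖) (half_pos hp)
    have := sub_two_mul_pDefect_eq p x y
    rw [h, mul_zero] at this
    linarith
  · rintro (rfl | rfl)
    exacts [pDefect_zero_left hp.ne' y, pDefect_zero_right hp.ne' x]

end InnerProductSpace

theorem pos_of_fact_one_le_ofReal {p : ℝ} [hp : Fact (1 ≤ ENNReal.ofReal p)] : 0 < p :=
  zero_lt_one.trans_le (ENNReal.one_le_ofReal.1 hp.out)

namespace MeasureTheory.Lp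

variable {α E : Type*} [MeasurableSpace α] {μ : Measure α} [NormedAddCommGroup E] {p : ℝ}

theorem pDefect_coeFn_ae_eq (f g : Lp E (ENNReal.ofReal p) μ) :
    (fun ω => pDefect p (f ω) (g ω)) =ᵐ[μ]
      fun ω => ‖(f + g) ω‖ ^ p + ‖(f - g) ω‖ ^ p - 2 * ‖f ω‖ ^ p - 2 * ‖g ω‖ ^ p := by
  filter_upwards [Lp.coeFn_add f g, Lp.coeFn_sub f g] with ω hadd hsub
  rw [hadd, hsub, Pi.add_apply, Pi.sub_apply, pDefect]

variable [Fact (1 ≤ ENNReal.ofReal p)]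

theorem norm_rpow_eq_integral (f : Lp E (ENNReal.ofReal p) μ) :
    ‖f‖ ^ p = ∫ ω, ‖f ω‖ ^ p ∂μ := by
  have hp : 0 < p := pos_of_fact_one_le_ofReal
  have h := MemLp.eLpNorm_eq_integral_rpow_norm (by simpa using hp) ENNReal.ofReal_ne_top
    (Lp.memLp f)
  rw [ENNReal.toReal_ofReal hp.le] at h
  rw [Lp.norm_def, h, ENNReal.toReal_ofReal (by positivity), ← Real.rpow_mul (by positivity),
    inv_mul_cancel₀ hp.ne', Real.rpow_one]

theorem integrable_norm_rpow (f : Lp E (ENNReal.ofReal p) μ) :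
    Integrable (fun ω => ‖f ω‖ ^ p) μ := by
  have hp : 0 < p := pos_of_fact_one_le_ofReal
  simpa [ENNReal.toReal_ofReal hp.le] using
    (Lp.memLp f).integrable_norm_rpow (by simpa using hp) ENNReal.ofReal_ne_top

theorem integrable_pDefect (f g : Lp E (ENNReal.ofReal p) μ) :
    Integrable (fun ω => pDefect p (f ω) (g ω)) μ :=
  ((((integrable_norm_rpow (f + g)).add (integrable_norm_rpow (f - g))).sub
    ((integrable_norm_rpow f).const_mul 2)).sub ((integrable_norm_rpow g).const_mul 2)).congr
    (pDefect_coeFn_ae_eq f g).symm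

theorem pDefect_eq_integral (f g : Lp E (ENNReal.ofReal p) μ) :
    pDefect p f g = ∫ ω, pDefect p (f ω) (g ω) ∂μ := by
  have i := fun h : Lp E (ENNReal.ofReal p) μ => integrable_norm_rpow h
  rw [integral_congr_ae (pDefect_coeFn_ae_eq f g), integral_sub, integral_sub, integral_add,
    integral_const_mul, integral_const_mul, pDefect, norm_rpow_eq_integral,
    norm_rpow_eq_integral, norm_rpow_eq_integral, norm_rpow_eq_integral]
  exacts [i _, i _, (i _).add (i _), (i _).const_mul 2, ((i _).add (i _)).sub ((i _).const_mul 2),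
    (i _).const_mul 2]

variable [InnerProductSpace ℝ E]

theorem sub_two_mul_pDefect_nonneg (f g : Lp E (ENNReal.ofReal p) μ) :
    0 ≤ (p - 2) * pDefect p f g := by
  have hp : 0 < p := pos_of_fact_one_le_ofReal
  rw [pDefect_eq_integral, ← integral_const_mul]
  exact integral_nonneg fun ω => _root_.sub_two_mul_pDefect_nonneg hp _ _

theorem pDefect_eq_zero_iff (hp2 : p ≠ 2) {f g : Lp E (ENNReal.ofReal p) μ} :
    pDefect p f g = 0 ↔ ∀ᵐ ω ∂μ, f ω = 0 ∨ g ω = 0 := by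
  have hp : 0 < p := pos_of_fact_one_le_ofReal
  have hp2' : p - 2 ≠ 0 := sub_ne_zero.2 hp2
  rw [← mul_right_inj' hp2', mul_zero, pDefect_eq_integral, ← integral_const_mul,
    integral_eq_zero_iff_of_nonneg (fun ω => _root_.sub_two_mul_pDefect_nonneg hp _ _)
      ((integrable_pDefect f g).const_mul _)]
  refine Filter.eventually_congr (Filter.Eventually.of_forall fun ω => ?_)
  simp only [Pi.zero_apply, mul_eq_zero, hp2', false_or]
  exact _root_.pDefect_eq_zero_iff hp hp2

end MeasureTheory.Lp

namespace lp

variable {ι : Type*} {E : ι → Type*} [∀ i, NormedAddCommGroup (E i)] {p : ℝ}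
  [Fact (1 ≤ ENNReal.ofReal p)]

theorem hasSum_pDefect (f g : lp E (ENNReal.ofReal p)) :
    HasSum (fun i => pDefect p (f i) (g i)) (pDefect p f g) := by
  have hp : 0 < p := pos_of_fact_one_le_ofReal
  have hs := fun h : lp E (ENNReal.ofReal p) => by
    simpa only [ENNReal.toReal_ofReal hp.le] using
      lp.hasSum_norm (by simpa [ENNReal.toReal_ofReal hp.le] using hp) h
  have H := (((hs (f + g)).add (hs (f - g))).sub ((hs f).mul_left 2)).sub ((hs g).mul_left 2)
  simpa only [pDefect, lp.coeFn_add, lp.coeFn_sub, Pi.add_apply, Pi.sub_apply] using H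

variable [∀ i, InnerProductSpace ℝ (E i)]

theorem sub_two_mul_pDefect_nonneg (f g : lp E (ENNReal.ofReal p)) :
    0 ≤ (p - 2) * pDefect p f g := by
  have hp : 0 < p := pos_of_fact_one_le_ofReal
  exact ((hasSum_pDefect f g).mul_left (p - 2)).nonneg
    fun i => _root_.sub_two_mul_pDefect_nonneg hp _ _

theorem pDefect_eq_zero_iff (hp2 : p ≠ 2) {f g : lp E (ENNReal.ofReal p)} :
    pDefect p f g = 0 ↔ ∀ i, f i = 0 ∨ g i = 0 := by
  have hp : 0 < p := pos_of_fact_one_le_ofReal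
  have hp2' : p - 2 ≠ 0 := sub_ne_zero.2 hp2
  have H := (hasSum_pDefect f g).mul_left (p - 2)
  rw [← mul_right_inj' hp2', mul_zero, ← H.tsum_eq, ← H.summable.hasSum_iff,
    hasSum_zero_iff_of_nonneg fun i => _root_.sub_two_mul_pDefect_nonneg hp _ _]
  simp only [funext_iff, Pi.zero_apply, mul_eq_zero, hp2', false_or]
  exact forall_congr' fun i => _root_.pDefect_eq_zero_iff hp hp2

end lp

namespace WithLp

variable {E F : Type*} [NormedAddCommGroup E] [NormedAddCommGroup F] {p : ℝ}
  [Fact (1 ≤ ENNReal.ofReal p)]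

theorem prod_norm_rpow_eq_add (x : WithLp (ENNReal.ofReal p) (E × F)) :
    ‖x‖ ^ p = ‖x.fst‖ ^ p + ‖x.snd‖ ^ p := by
  have hp : 0 < p := pos_of_fact_one_le_ofReal
  have h := prod_norm_eq_add (by rwa [ENNReal.toReal_ofReal hp.le]) x
  rw [ENNReal.toReal_ofReal hp.le] at h
  rw [h, ← Real.rpow_mul (by positivity), one_div, inv_mul_cancel₀ hp.ne', Real.rpow_one]

theorem pDefect_prod (x y : WithLp (ENNReal.ofReal p) (E × F)) :
    pDefect p x y = pDefect p x.fst y.fst + pDefect p x.snd y.snd := by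
  simp only [pDefect, prod_norm_rpow_eq_add, add_fst, add_snd, sub_fst, sub_snd]
  ring

theorem pDefect_prod_eq_zero_iff (hp2 : p ≠ 2) (hE : ∀ a b : E, 0 ≤ (p - 2) * pDefect p a b)
    (hF : ∀ a b : F, 0 ≤ (p - 2) * pDefect p a b) {x y : WithLp (ENNReal.ofReal p) (E × F)} :
    pDefect p x y = 0 ↔ pDefect p x.fst y.fst = 0 ∧ pDefect p x.snd y.snd = 0 := by
  have hp2' : p - 2 ≠ 0 := sub_ne_zero.2 hp2
  rw [← mul_right_inj' hp2', mul_zero, pDefect_prod, mul_add,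
    add_eq_zero_iff_of_nonneg (hE _ _) (hF _ _), mul_eq_zero, mul_eq_zero]
  simp only [hp2', false_or]

end WithLp

def IsPAtom (p : ℝ) {E : Type*} [SeminormedAddCommGroup E] (x : E) : Prop :=
  x ≠ 0 ∧ ∀ y z : E, pDefect p y z = 0 → x = y + z → y = 0 ∨ z = 0

section Isometry

variable {R E F : Type*} [Semiring R] [SeminormedAddCommGroup E] [SeminormedAddCommGroup F]
  [Module R E] [Module R F] {p : ℝ}

theorem LinearIsometryEquiv.pDefect_map (e : E ≃ₗᵢ[R] F) (x y : E) :
    pDefect p (e x) (e y) = pDefect p x y := by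
  simp only [pDefect, ← map_add, ← map_sub, LinearIsometryEquiv.norm_map]

theorem IsPAtom.map (e : E ≃ₗᵢ[R] F) {x : E} (hx : IsPAtom p x) : IsPAtom p (e x) := by
  refine ⟨(map_ne_zero_iff e e.injective).2 hx.1, fun y z hyz hsum => ?_⟩
  have hsum' : x = e.symm y + e.symm z := by
    rw [← map_add, ← hsum, LinearIsometryEquiv.symm_apply_apply]
  rw [← e.symm.pDefect_map] at hyz
  simpa using hx.2 _ _ hyz hsum'

theorem LinearIsometryEquiv.isPAtom_map_iff (e : E ≃ₗᵢ[R] F) {x : E} :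
    IsPAtom p (e x) ↔ IsPAtom p x :=
  ⟨fun h => by simpa using h.map e.symm, IsPAtom.map e⟩

end Isometry

namespace MeasureTheory.Lp

variable {α : Type*} [MeasurableSpace α] {μ : Measure α} {p : ℝ} [Fact (1 ≤ ENNReal.ofReal p)]

theorem pDefect_eq_zero_iff_mul (hp2 : p ≠ 2) {f g : Lp ℂ (ENNReal.ofReal p) μ} :
    pDefect p f g = 0 ↔ (f : α → ℂ) * (g : α → ℂ) =ᵐ[μ] 0 := by
  rw [pDefect_eq_zero_iff hp2]
  simp only [Filter.EventuallyEq, Pi.mul_apply, Pi.zero_apply, mul_eq_zero]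

theorem subvec_iff_pDefect_sub_eq_zero (hp2 : p ≠ 2) {h g : Lp ℂ (ENNReal.ofReal p) μ} :
    Subvec h g ↔ pDefect p h (g - h) = 0 := by
  rw [pDefect_eq_zero_iff hp2]
  constructor
  · rintro ⟨A, -, hA⟩
    filter_upwards [hA, Lp.coeFn_sub g h] with ω hω hsub
    rw [hsub, Pi.sub_apply, hω]
    by_cases hωA : ω ∈ A <;> simp [hωA]
  · intro hdisj
    refine ⟨Function.support h, (Lp.stronglyMeasurable h).measurableSet_support, ?_⟩
    filter_upwards [hdisj, Lp.coeFn_sub g h] with ω hω hsub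
    rw [hsub, Pi.sub_apply, sub_eq_zero] at hω
    by_cases hωh : h ω = 0
    · simp [hωh]
    · rw [Set.indicator_of_mem hωh, hω.resolve_left hωh]

theorem subvecAtom_iff_isPAtom (hp2 : p ≠ 2) {g : Lp ℂ (ENNReal.ofReal p) μ} :
    SubvecAtom g ↔ IsPAtom p g := by
  refine and_congr_right fun _ => ⟨fun hg y z hyz hsum => ?_, fun hg h hh => ?_⟩
  · have hz : z = g - y := by rw [hsum, add_sub_cancel_left]
    rw [hz, ← subvec_iff_pDefect_sub_eq_zero hp2] at hyz
    refine (hg y hyz).imp id fun hyg => ?_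
    rw [hz, hyg, sub_self]
  · refine (hg h (g - h) ((subvec_iff_pDefect_sub_eq_zero hp2).1 hh)
      (add_sub_cancel h g).symm).imp id fun hgh => (sub_eq_zero.1 hgh).symm

end MeasureTheory.Lp

/-- Cutting `ℝ` into intervals shorter than `μ S`, some piece meets `S` in positive measure and
cannot carry all of it. -/
theorem MeasureTheory.Measure.exists_measure_inter_ne_zero_and_diff_ne_zero_of_le_volume
    {μ : Measure ℝ} (hμ : μ ≤ volume) {S : Set ℝ} (hS : μ S ≠ 0) :
    ∃ A : Set ℝ, MeasurableSet A ∧ μ (S ∩ A) ≠ 0 ∧ μ (S \ A) ≠ 0 := by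
  obtain ⟨ε, -, hε, hεS⟩ := ENNReal.lt_iff_exists_real_btwn.1 (pos_iff_ne_zero.2 hS)
  have hε : 0 < ε := ENNReal.ofReal_pos.1 hε
  set I : ℤ → Set ℝ := fun n => Ico (n • ε) ((n + 1) • ε)
  have hcover : S = ⋃ n, S ∩ I n := by rw [← inter_iUnion, iUnion_Ico_zsmul hε, inter_univ]
  obtain ⟨n, hn⟩ : ∃ n, μ (S ∩ I n) ≠ 0 := by
    by_contra! h
    exact hS (hcover ▸ measure_iUnion_null h)
  refine ⟨I n, measurableSet_Ico, hn, fun hdiff => ?_⟩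
  have hsmall : μ (S ∩ I n) ≤ ENNReal.ofReal ε :=
    calc μ (S ∩ I n) ≤ volume (I n) := (measure_mono inter_subset_right).trans (hμ _)
      _ = ENNReal.ofReal ε := by rw [Real.volume_Ico, add_smul, one_smul, add_sub_cancel_left]
  have := measure_le_inter_add_sdiff μ S (I n)
  rw [hdiff, add_zero] at this
  exact (this.trans hsmall).not_gt hεS

theorem MeasureTheory.Lp.not_subvecAtom_of_le_volume {μ : Measure ℝ} (hμ : μ ≤ volume) {p : ℝ}
    [Fact (1 ≤ ENNReal.ofReal p)] (f : Lp ℂ (ENNReal.ofReal p) μ) : ¬ SubvecAtom f := by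
  rintro ⟨hf, hatom⟩
  have hnull : ∀ A, A.indicator (f : ℝ → ℂ) =ᵐ[μ] 0 ↔ μ (Function.support f ∩ A) = 0 := by
    intro A
    rw [Filter.EventuallyEq, ae_iff, inter_comm, ← support_indicator]
    rfl
  have hS : μ (Function.support f) ≠ 0 := by
    rwa [Ne, ← inter_univ (Function.support f), ← hnull, indicator_univ,
      ← Lp.eq_zero_iff_ae_eq_zero]
  obtain ⟨A, hA, hSA, hSAc⟩ :=
    Measure.exists_measure_inter_ne_zero_and_diff_ne_zero_of_le_volume hμ hS
  have hmem := (Lp.memLp f).indicator hA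
  have hrep := hmem.coeFn_toLp
  rcases hatom (hmem.toLp _) ⟨A, hA, hrep⟩ with h0 | hf'
  · rw [h0] at hrep
    exact hSA ((hnull A).1 (hrep.symm.trans (Lp.coeFn_zero _ _ _)))
  · rw [hf'] at hrep
    refine hSAc ?_
    rw [sdiff_eq, ← hnull, indicator_compl]
    filter_upwards [hrep] with ω hω
    simp [hω]

theorem lp.isPAtom_single {ι : Type*} [DecidableEq ι] {E : ι → Type*}
    [∀ i, NormedAddCommGroup (E i)] [∀ i, InnerProductSpace ℝ (E i)] {p : ℝ}
    [Fact (1 ≤ ENNReal.ofReal p)] (hp2 : p ≠ 2) (i : ι) {c : E i} (hc : c ≠ 0) :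
    IsPAtom p (lp.single (ENNReal.ofReal p) i c) := by
  refine ⟨fun h => hc (by simpa using congrArg (fun f : lp E _ => f i) h), fun y z hyz hsum => ?_⟩
  rw [lp.pDefect_eq_zero_iff hp2] at hyz
  have hoff : ∀ j ≠ i, y j = 0 ∧ z j = 0 := by
    intro j hj
    have hj' : y j + z j = 0 := by
      rw [← lp.single_apply_ne (ENNReal.ofReal p) i c hj, hsum]; rfl
    rcases hyz j with h | h <;> simp_all
  rcases hyz i with h | h
  · refine .inl (lp.ext (funext fun j => ?_))
    rcases eq_or_ne j i with rfl | hj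
    exacts [h, (hoff j hj).1]
  · refine .inr (lp.ext (funext fun j => ?_))
    rcases eq_or_ne j i with rfl | hj
    exacts [h, (hoff j hj).2]

namespace WithLp

theorem prod_ext {q : ENNReal} {E F : Type*} [AddCommGroup E] [AddCommGroup F]
    {x y : WithLp q (E × F)} (h₁ : x.fst = y.fst)
    (h₂ : x.snd = y.snd) : x = y :=
  (WithLp.ext_iff q).2 (Prod.ext h₁ h₂)

theorem ker_fstₗ_inf_ker_sndₗ (q : ENNReal) (R E F : Type*) [Semiring R] [AddCommGroup E]
    [AddCommGroup F] [Module R E] [Module R F] :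
    LinearMap.ker (fstₗ q R E F) ⊓ LinearMap.ker (sndₗ q R E F) = ⊥ :=
  eq_bot_iff.2 fun _ hx => prod_ext hx.1 hx.2

variable {E F : Type*} [NormedAddCommGroup E] [NormedAddCommGroup F] {p : ℝ}
  [Fact (1 ≤ ENNReal.ofReal p)]

theorem snd_eq_zero_of_isPAtom (hF : ∀ b : F, ¬ IsPAtom p b)
    {x : WithLp (ENNReal.ofReal p) (E × F)} (hx : IsPAtom p x) : x.snd = 0 := by
  have hp : p ≠ 0 := (pos_of_fact_one_le_ofReal).ne'
  have hsplit : ∀ {a a' : E} {b b' : F}, pDefect p a a' = 0 → pDefect p b b' = 0 →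
      pDefect p (toLp (ENNReal.ofReal p) (a, b)) (toLp _ (a', b')) = 0 := fun ha hb => by
    rw [pDefect_prod, toLp_fst, toLp_fst, toLp_snd, toLp_snd, ha, hb, add_zero]
  by_contra hs
  by_cases hf : x.fst = 0
  · refine hF x.snd ⟨hs, fun y z hyz hsum => ?_⟩
    simpa using hx.2 (toLp _ (0, y)) (toLp _ (0, z)) (hsplit (pDefect_zero_left hp 0) hyz)
      (prod_ext (by simp [hf]) (by simp [hsum]))
  · rcases hx.2 (toLp _ (x.fst, 0)) (toLp _ (0, x.snd))
      (hsplit (pDefect_zero_right hp _) (pDefect_zero_left hp _))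
      (prod_ext (by simp) (by simp)) with h | h
    · exact hf (by simpa using h)
    · exact hs (by simpa using h)

theorem isPAtom_toLp_of_isPAtom [NormedSpace ℂ F] (hp2 : p ≠ 2)
    (hE : ∀ a b : E, 0 ≤ (p - 2) * pDefect p a b) (hF : ∀ a b : F, 0 ≤ (p - 2) * pDefect p a b)
    {a : E} (ha : IsPAtom p a) : IsPAtom p (toLp (ENNReal.ofReal p) (a, (0 : F))) := by
  have hp : 0 < p := pos_of_fact_one_le_ofReal
  refine ⟨by simpa using ha.1, fun y z hyz hsum => ?_⟩
  rw [pDefect_prod_eq_zero_iff hp2 hE hF] at hyz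
  have hsnd : z.snd = -y.snd := by
    rw [eq_neg_iff_add_eq_zero, add_comm, ← add_snd, ← hsum, toLp_snd]
  have hy : y.snd = 0 := eq_zero_of_pDefect_neg_right_self ℂ hp hp2 (hsnd ▸ hyz.2)
  have hz : z.snd = 0 := by rw [hsnd, hy, neg_zero]
  refine (ha.2 _ _ hyz.1 (by rw [← add_fst, ← hsum, toLp_fst])).imp (fun h => ?_) (fun h => ?_)
  exacts [prod_ext h hy, prod_ext h hz]

end WithLp

theorem LinearIsometryEquiv.map_topologicalClosure {R E F : Type*} [Semiring R]
    [SeminormedAddCommGroup E] [SeminormedAddCommGroup F] [Module R E] [Module R F]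
    [ContinuousConstSMul R E] [ContinuousConstSMul R F] (e : E ≃ₗᵢ[R] F) (s : Submodule R E) :
    s.topologicalClosure.map e.toLinearEquiv.toLinearMap =
      (s.map e.toLinearEquiv.toLinearMap).topologicalClosure :=
  SetLike.coe_injective (e.toHomeomorph.image_closure s)

section lpProd

variable {ι F : Type*} [DecidableEq ι] [NormedAddCommGroup F] {p : ℝ}
  [Fact (1 ≤ ENNReal.ofReal p)]

local notation "ℓp" => lp (fun _ : ι => ℂ) (ENNReal.ofReal p)

open WithLp

theorem topologicalClosure_span_isPAtom_eq_ker_sndₗ [NormedSpace ℂ F] (hp2 : p ≠ 2)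
    (hF : ∀ a b : F, 0 ≤ (p - 2) * pDefect p a b) (hFat : ∀ b : F, ¬ IsPAtom p b) :
    (Submodule.span ℂ {x : WithLp (ENNReal.ofReal p) (ℓp × F) | IsPAtom p x}).topologicalClosure =
      LinearMap.ker (sndₗ (ENNReal.ofReal p) ℂ ℓp F) := by
  refine le_antisymm (Submodule.topologicalClosure_minimal _ ?_ (sndL _ ℂ ℓp F).isClosed_ker)
    fun x hx => ?_
  · exact Submodule.span_le.2 fun x hx => snd_eq_zero_of_isPAtom hFat hx
  have hatom : ∀ i : ι, IsPAtom p (toLp (ENNReal.ofReal p)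
      (lp.single (ENNReal.ofReal p) i (1 : ℂ), (0 : F))) := fun i =>
    isPAtom_toLp_of_isPAtom hp2 lp.sub_two_mul_pDefect_nonneg hF
      (lp.isPAtom_single (E := fun _ : ι => ℂ) hp2 i one_ne_zero)
  let inl := (prodContinuousLinearEquiv (ENNReal.ofReal p) ℂ ℓp F).symm.toContinuousLinearMap.comp
    (ContinuousLinearMap.inl ℂ ℓp F)
  have H := (lp.hasSum_single ENNReal.ofReal_ne_top x.fst).mapL inl
  have hx' : inl x.fst = x := prod_ext rfl hx.symm
  rw [hx'] at H
  refine mem_closure_of_tendsto H (Filter.Eventually.of_forall fun s =>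
    Submodule.sum_mem _ fun i _ => ?_)
  have : inl (lp.single (ENNReal.ofReal p) i (x.fst i)) = x.fst i • toLp (ENNReal.ofReal p)
      (lp.single (ENNReal.ofReal p) i (1 : ℂ), (0 : F)) := by
    refine prod_ext ?_ (smul_zero _).symm
    change lp.single (E := fun _ : ι => ℂ) _ i (x.fst i) = x.fst i • lp.single _ i 1
    rw [← lp.single_smul, smul_eq_mul, mul_one]
  rw [this]
  exact Submodule.smul_mem _ _ (Submodule.subset_span (hatom i))

theorem fst_eq_zero_of_pDefect_single_eq_zero (hp2 : p ≠ 2)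
    (hF : ∀ a b : F, 0 ≤ (p - 2) * pDefect p a b) {y : WithLp (ENNReal.ofReal p) (ℓp × F)}
    (hy : ∀ i, pDefect p (toLp (ENNReal.ofReal p)
      (lp.single (ENNReal.ofReal p) i (1 : ℂ), (0 : F))) y = 0) : y.fst = 0 :=
  lp.ext <| funext fun i =>
    (((lp.pDefect_eq_zero_iff hp2).1
      ((pDefect_prod_eq_zero_iff hp2 lp.sub_two_mul_pDefect_nonneg hF).1 (hy i)).1) i).resolve_left
      (by simp)

end lpProd

theorem stmt16 {α : Type*} [MeasurableSpace α] (μ : Measure α)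
    (p : ℝ) (hp2 : p ≠ 2) [Fact (1 ≤ ENNReal.ofReal p)]
    (U V : Submodule ℂ (Lp ℂ (ENNReal.ofReal p) μ))
    (hdisj : ∀ f ∈ U, ∀ g ∈ V, (f : α → ℂ) * (g : α → ℂ) =ᵐ[μ] 0)
    (hsup : U ⊔ V = ⊤)
    (hU : U = (Submodule.span ℂ {g : Lp ℂ (ENNReal.ofReal p) μ |
      SubvecAtom g}).topologicalClosure)
    (T : WithLp (ENNReal.ofReal p)
          ((lp (fun _ : ℕ => ℂ) (ENNReal.ofReal p)) ×
            (Lp ℂ (ENNReal.ofReal p) (volume.restrict (Set.Icc (0:ℝ) 1))))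
        ≃ₗᵢ[ℂ] Lp ℂ (ENNReal.ofReal p) μ) :
    (⇑T '' {x | (WithLp.equiv _ _ x).2 = 0} = (U : Set (Lp ℂ (ENNReal.ofReal p) μ))) ∧
    (⇑T '' {x | (WithLp.equiv _ _ x).1 = 0} = (V : Set (Lp ℂ (ENNReal.ofReal p) μ))) := by
  have hFsign := Lp.sub_two_mul_pDefect_nonneg (μ := volume.restrict (Icc (0 : ℝ) 1)) (p := p)
    (E := ℂ)
  have hFat : ∀ b : Lp ℂ (ENNReal.ofReal p) (volume.restrict (Icc (0 : ℝ) 1)), ¬ IsPAtom p b :=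
    fun b hb => Lp.not_subvecAtom_of_le_volume Measure.restrict_le_self b
      ((Lp.subvecAtom_iff_isPAtom hp2).2 hb)
  have hatoms : {g | SubvecAtom g} = T '' {x | IsPAtom p x} := by
    ext g
    rw [mem_ofPred_eq, Lp.subvecAtom_iff_isPAtom hp2, ← T.apply_symm_apply g, T.isPAtom_map_iff,
      T.image_eq_preimage_symm]
    simp
  have hU₀ : U = (LinearMap.ker (WithLp.sndₗ _ ℂ _ _)).map T.toLinearEquiv.toLinearMap := by
    rw [hU, hatoms, ← topologicalClosure_span_isPAtom_eq_ker_sndₗ hp2 hFsign hFat,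
      T.map_topologicalClosure, Submodule.map_span]
    rfl
  have hV₀ : V ≤ (LinearMap.ker (WithLp.fstₗ _ ℂ _ _)).map T.toLinearEquiv.toLinearMap :=
    fun v hv => ⟨T.symm v, fst_eq_zero_of_pDefect_single_eq_zero hp2 hFsign fun i => by
      rw [← T.pDefect_map, T.apply_symm_apply, Lp.pDefect_eq_zero_iff_mul hp2]
      exact hdisj _ (hU₀ ▸ ⟨_, rfl, rfl⟩) v hv, T.apply_symm_apply v⟩
  have hV : V = (LinearMap.ker (WithLp.fstₗ _ ℂ _ _)).map T.toLinearEquiv.toLinearMap := by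
    refine eq_of_le_of_inf_le_of_sup_le hV₀ ?_ (by rw [sup_comm V, hsup]; exact le_top)
    rw [hU₀, ← Submodule.map_inf _ T.injective, WithLp.ker_fstₗ_inf_ker_sndₗ, Submodule.map_bot]
    exact bot_le
  rw [hU₀, hV, Submodule.map_coe, Submodule.map_coe]
  exact ⟨rfl, rfl⟩
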